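/- arXiv:math/0609245 — 2 statements merged into one kernel-verified Lean document; each statement's English description precedes it below -/
import Mathlib

section
/- Let f be the inverse of h(u) = (1/2)u√(1+u²) + (1/2)ln(u + √(1+u²)) and define L(v) = f(v)². Then L is a convex function on ℝ. -/
/-- The change of variables `h(u) = (1/2)·u·√(1+u²) + (1/2)·ln(u + √(1+u²))`. -/
noncomputable def h (u : ℝ) : ℝ :=
  (1 / 2) * u * Real.sqrt (1 + u ^ 2) + (1 / 2) * Real.log (u + Real.sqrt (1 + u ^ 2))

lemma sqrt_pos' (u : ℝ) : 0 < Real.sqrt (1 + u ^ 2) :=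
  Real.sqrt_pos.2 (by positivity)

lemma sq_sqrt' (u : ℝ) : Real.sqrt (1 + u ^ 2) ^ 2 = 1 + u ^ 2 :=
  Real.sq_sqrt (by positivity)

lemma add_sqrt_pos (u : ℝ) : 0 < u + Real.sqrt (1 + u ^ 2) := by
  have h1 : |u| < Real.sqrt (1 + u ^ 2) := by
    have h2 := Real.sqrt_lt_sqrt (sq_nonneg u) (by linarith : u ^ 2 < 1 + u ^ 2)
    rwa [Real.sqrt_sq_eq_abs] at h2
  rcases abs_lt.1 h1 with ⟨h3, _⟩
  linarith

lemma h_hasDeriv (u : ℝ) : HasDerivAt h (Real.sqrt (1 + u ^ 2)) u := by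
  have hs := sqrt_pos' u
  have hs2 := sq_sqrt' u
  have hus := add_sqrt_pos u
  have d1 : HasDerivAt (fun u : ℝ => 1 + u ^ 2) (2 * u) u := by
    simpa using (hasDerivAt_pow 2 u).const_add 1
  have dsqrt : HasDerivAt (fun u : ℝ => Real.sqrt (1 + u ^ 2))
      (u / Real.sqrt (1 + u ^ 2)) u := by
    have := (Real.hasDerivAt_sqrt (by positivity : (1 : ℝ) + u ^ 2 ≠ 0)).comp u d1
    refine this.congr_deriv ?_
    field_simp
  have p1 : HasDerivAt (fun u : ℝ => 1 / 2 * u * Real.sqrt (1 + u ^ 2))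
      (1 / 2 * 1 * Real.sqrt (1 + u ^ 2) + 1 / 2 * u * (u / Real.sqrt (1 + u ^ 2))) u := by
    exact (((hasDerivAt_id u).const_mul (1 / 2 : ℝ)).mul dsqrt)
  have dinner : HasDerivAt (fun u : ℝ => u + Real.sqrt (1 + u ^ 2))
      (1 + u / Real.sqrt (1 + u ^ 2)) u := (hasDerivAt_id u).add dsqrt
  have p2 : HasDerivAt (fun u : ℝ => 1 / 2 * Real.log (u + Real.sqrt (1 + u ^ 2)))
      (1 / 2 * ((u + Real.sqrt (1 + u ^ 2))⁻¹ * (1 + u / Real.sqrt (1 + u ^ 2)))) u := by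
    exact ((Real.hasDerivAt_log (ne_of_gt hus)).comp u dinner).const_mul (1 / 2 : ℝ)
  have := p1.add p2
  refine this.congr_deriv ?_
  have hsne : Real.sqrt (1 + u ^ 2) ≠ 0 := ne_of_gt hs
  field_simp
  linear_combination (-(u + Real.sqrt (1 + u ^ 2))) * hs2

/-- Let `f` be the inverse of `h` and `L(v) = f(v)²`.  Then `L` is convex on `ℝ`. -/
theorem L_convex (f : ℝ → ℝ)
    (hf₁ : Function.LeftInverse f h) (hf₂ : Function.RightInverse f h)
    (L : ℝ → ℝ) (hL : ∀ v : ℝ, L v = f v ^ 2) :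
    ConvexOn ℝ Set.univ L := by
  have hLe : L = fun v => f v ^ 2 := funext hL
  have hsm : StrictMono h := by
    apply strictMono_of_deriv_pos
    intro x
    rw [(h_hasDeriv x).deriv]
    exact sqrt_pos' x
  have fsm : StrictMono f := fun a b hab => by
    have : h (f a) < h (f b) := by rw [hf₂ a, hf₂ b]; exact hab
    exact hsm.lt_iff_lt.mp this
  have fsurj : Function.Surjective f := hf₁.surjective
  have fcont : Continuous f := by
    have := (StrictMono.orderIsoOfSurjective f fsm fsurj).continuous
    rwa [StrictMono.coe_orderIsoOfSurjective] at this
  have f_deriv : ∀ v : ℝ, HasDerivAt f (Real.sqrt (1 + f v ^ 2))⁻¹ v := fun v =>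
    HasDerivAt.of_local_left_inverse fcont.continuousAt (h_hasDeriv (f v))
      (ne_of_gt (sqrt_pos' _)) (Filter.Eventually.of_forall hf₂)
  have L_deriv : ∀ v : ℝ, HasDerivAt L
      ((2 : ℕ) * f v ^ 1 * (Real.sqrt (1 + f v ^ 2))⁻¹) v := fun v => by
    rw [hLe]; exact (f_deriv v).pow 2
  have key : ∀ a b : ℝ, a ≤ b →
      a * (Real.sqrt (1 + a ^ 2))⁻¹ ≤ b * (Real.sqrt (1 + b ^ 2))⁻¹ := by
    intro a b hab
    have hsa := sqrt_pos' a
    have hsb := sqrt_pos' b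
    have ha2 := sq_sqrt' a
    have hb2 := sq_sqrt' b
    rw [← div_eq_mul_inv, ← div_eq_mul_inv, div_le_div_iff₀ hsa hsb]
    rcases le_total 0 a with h0 | h0
    · nlinarith [mul_nonneg h0 hsb.le, mul_nonneg (h0.trans hab) hsa.le,
        sq_nonneg (a * Real.sqrt (1 + b ^ 2) - b * Real.sqrt (1 + a ^ 2)),
        sq_nonneg (a * Real.sqrt (1 + b ^ 2) + b * Real.sqrt (1 + a ^ 2))]
    rcases le_total b 0 with h1 | h1
    · nlinarith [mul_nonpos_of_nonpos_of_nonneg h0 hsb.le,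
        mul_nonpos_of_nonpos_of_nonneg h1 hsa.le,
        sq_nonneg (a * Real.sqrt (1 + b ^ 2) - b * Real.sqrt (1 + a ^ 2)),
        sq_nonneg (a * Real.sqrt (1 + b ^ 2) + b * Real.sqrt (1 + a ^ 2))]
    · have := mul_nonpos_of_nonpos_of_nonneg h0 hsb.le
      have := mul_nonneg h1 hsa.le
      linarith
  have Ldiff : Differentiable ℝ L := fun v => (L_deriv v).differentiableAt
  apply Monotone.convexOn_univ_of_deriv Ldiff
  intro x y hxy
  rw [(L_deriv x).deriv, (L_deriv y).deriv]
  have := key (f x) (f y) ((fsm.le_iff_le).2 hxy)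
  push_cast
  nlinarith [this]
end

section
/- Let f be the inverse of h(u) = (1/2)u√(1+u²) + (1/2)ln(u + √(1+u²)) and define L(v) = f(v)². Then L satisfies the Δ₂-condition L(2v) ≤ 4·L(v) for every v ∈ ℝ. -/
open Real Set

lemma apply_abs_of_odd_of_monotone {g : ℝ → ℝ} (hodd : Function.Odd g) (hmono : Monotone g)
    (x : ℝ) : g |x| = |g x| := by
  have hg0 := hodd.map_zero
  rcases le_or_gt 0 x with hx | hx
  · rw [abs_of_nonneg hx, abs_of_nonneg (hg0 ▸ hmono hx)]
  · rw [abs_of_neg hx, hodd, abs_of_nonpos (hg0 ▸ hmono hx.le)]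

lemma two_mul_apply_le_apply_two_mul {g : ℝ → ℝ} (hconv : ConvexOn ℝ (Ici (0 : ℝ)) g)
    (hg0 : g 0 = 0) {u : ℝ} (hu : 0 ≤ u) : 2 * g u ≤ g (2 * u) := by
  have := hconv.2 (mem_Ici.2 le_rfl) (mem_Ici.2 (by linarith : (0 : ℝ) ≤ 2 * u))
    (by norm_num : (0 : ℝ) ≤ 1 / 2) (by norm_num : (0 : ℝ) ≤ 1 / 2) (by norm_num)
  simp only [smul_eq_mul, mul_zero, hg0, zero_add] at this
  rw [← mul_assoc, one_div_mul_cancel two_ne_zero, one_mul] at this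
  linarith

lemma abs_apply_two_mul_le_of_rightInverse {g f : ℝ → ℝ} (hodd : Function.Odd g)
    (hmono : StrictMono g) (hdouble : ∀ u, 0 ≤ u → 2 * g u ≤ g (2 * u))
    (hf : Function.RightInverse f g) (v : ℝ) : |f (2 * v)| ≤ 2 * |f v| := by
  have habs := apply_abs_of_odd_of_monotone hodd hmono.monotone
  rw [← hmono.le_iff_le]
  calc g |f (2 * v)| = 2 * g |f v| := by
        rw [habs, habs, hf, hf, abs_mul, abs_two]
    _ ≤ g (2 * |f v|) := hdouble _ (abs_nonneg _)

lemma h_eq (u : ℝ) : h u = (1 / 2) * u * √(1 + u ^ 2) + (1 / 2) * arsinh u := by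
  rw [h, arsinh]

lemma h_odd : Function.Odd h := by
  intro u
  rw [h_eq, h_eq, arsinh_neg, neg_sq]
  ring

lemma h_zero : h 0 = 0 := h_odd.map_zero

lemma hasDerivAt_h (u : ℝ) : HasDerivAt h (√(1 + u ^ 2)) u := by
  have hpos : 0 < 1 + u ^ 2 := by positivity
  have hsqrt : HasDerivAt (fun x => √(1 + x ^ 2)) (2 * u / (2 * √(1 + u ^ 2))) u := by
    simpa using ((hasDerivAt_id u).pow 2 |>.const_add 1).sqrt hpos.ne'
  rw [show h = fun x => 1 / 2 * x * √(1 + x ^ 2) + 1 / 2 * arsinh x from funext h_eq]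
  refine ((((hasDerivAt_id' u).const_mul (1 / 2)).fun_mul hsqrt).fun_add
    ((hasDerivAt_arsinh u).const_mul (1 / 2))).congr_deriv ?_
  have hs : 0 < √(1 + u ^ 2) := sqrt_pos.2 hpos
  field_simp
  rw [sq_sqrt hpos.le]
  ring

lemma h_strictMono : StrictMono h :=
  strictMono_of_hasDerivAt_pos hasDerivAt_h fun u => sqrt_pos.2 (by positivity)

lemma h_convexOn : ConvexOn ℝ (Ici (0 : ℝ)) h := by
  have hderiv : deriv h = fun u => √(1 + u ^ 2) := funext fun u => (hasDerivAt_h u).deriv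
  refine MonotoneOn.convexOn_of_deriv (convex_Ici 0)
    (fun u _ => (hasDerivAt_h u).continuousAt.continuousWithinAt)
    (fun u _ => (hasDerivAt_h u).differentiableAt.differentiableWithinAt) ?_
  rw [interior_Ici, hderiv]
  intro a ha b _ hab
  have ha₀ : 0 ≤ a := le_of_lt ha
  dsimp only
  gcongr

theorem L_delta_two_general (f : ℝ → ℝ)
    (hf₂ : Function.RightInverse f h)
    (L : ℝ → ℝ) (hL : ∀ v : ℝ, L v = f v ^ 2) :
    ∀ v : ℝ, L (2 * v) ≤ 4 * L v := by
  intro v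
  have hdouble := abs_apply_two_mul_le_of_rightInverse h_odd h_strictMono
    (fun _ => two_mul_apply_le_apply_two_mul h_convexOn h_zero) hf₂ v
  calc L (2 * v) = f (2 * v) ^ 2 := hL _
    _ ≤ (2 * f v) ^ 2 := sq_le_sq.2 (by rwa [abs_mul, abs_two])
    _ = 4 * L v := by rw [hL]; ring

/-- Let `f` be the inverse of `h` and `L(v) = f(v)²`.  Then `L` satisfies the
`Δ₂`-condition `L(2v) ≤ 4·L(v)` for every `v`. -/
theorem L_delta_two (f : ℝ → ℝ)
    (hf₁ : Function.LeftInverse f h) (hf₂ : Function.RightInverse f h)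
    (L : ℝ → ℝ) (hL : ∀ v : ℝ, L v = f v ^ 2) :
    ∀ v : ℝ, L (2 * v) ≤ 4 * L v :=
  L_delta_two_general f hf₂ L hL
end
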